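/- Let M be a simple cographic matroid and c a 2-uniform colouring of M using exactly r(M)+1 colours. Then M has two disjoint rainbow circuits C_1, C_2 with |C_1| + |C_2| ≤ r(M) + 2. Equivalently, writing M = M*(G) for a connected graph G with n vertices, no 2-edge-cuts, and ε(G) = 2(n−2) edges coloured with n−2 colours each used exactly twice, G contains two edge-disjoint rainbow cocycles (edge cuts with pairwise distinct edge colours) whose sizes sum to at most n − 1. -/

import Mathlib

open Matroid
open scoped symmDiff Classical

namespace RainbowPaper

variable {α : Type*} {κ : Type*}

/-- A circuit of a matroid: a minimal dependent set. -/
def Circuit (M : Matroid α) (C : Set α) : Prop :=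
  M.Dep C ∧ ∀ D, D ⊂ C → ¬ M.Dep D

/-- The rank of a set in a matroid: the supremum of the cardinalities of its
independent subsets. -/
noncomputable def rkSet (M : Matroid α) (X : Set α) : ℕ :=
  sSup {n | ∃ I, M.Indep I ∧ I ⊆ X ∧ I.ncard = n}

/-- The rank of a matroid. -/
noncomputable def rk (M : Matroid α) : ℕ := rkSet M M.E

/-- A matroid is simple if every subset of the ground set with at most two
elements is independent (no loops, no parallel pairs). -/
def Simple (M : Matroid α) : Prop := ∀ X ⊆ M.E, X.ncard ≤ 2 → M.Indep X

/-- A matroid is binary if it is representable over `GF(2)`. -/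
def IsBinary (M : Matroid α) : Prop :=
  ∃ (n : ℕ) (φ : α → (Fin n → ZMod 2)),
    ∀ I ⊆ M.E, (M.Indep I ↔ LinearIndependent (ZMod 2) (fun e : I => φ e.1))

/-- A matroid is regular if it is representable over every field. -/
def IsRegular (M : Matroid α) : Prop :=
  ∀ (F : Type) [Field F], ∃ (n : ℕ) (φ : α → (Fin n → F)),
    ∀ I ⊆ M.E, (M.Indep I ↔ LinearIndependent F (fun e : I => φ e.1))

/-- The signed incidence vector of an edge with given endpoints. -/
noncomputable def incVec {V : Type} (p : V × V) : V → ℚ :=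
  fun v => (if v = p.1 then (1 : ℚ) else 0) - (if v = p.2 then (1 : ℚ) else 0)

/-- A matroid is graphic if it is the cycle matroid of a graph, equivalently it is
represented by the signed incidence vectors of the edges of some graph. -/
def IsGraphic (M : Matroid α) : Prop :=
  ∃ (V : Type) (ends : α → V × V),
    ∀ I ⊆ M.E, (M.Indep I ↔ LinearIndependent ℚ (fun e : I => incVec (ends e.1)))

/-- A matroid is cographic if its dual is graphic. -/
def IsCographic (M : Matroid α) : Prop := IsGraphic M✶

/-- The colour class of the colour `s` in the coloured matroid `(M, c)`. -/
def colourClass (M : Matroid α) (c : α → κ) (s : κ) : Set α := {e ∈ M.E | c e = s}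

/-- A rainbow circuit: a circuit on which the colouring is injective. -/
def RainbowCircuit (M : Matroid α) (c : α → κ) (C : Set α) : Prop :=
  Circuit M C ∧ Set.InjOn c C

/-- A coloured matroid is circuit-achromatic if it has no rainbow circuit. -/
def CircuitAchromatic (M : Matroid α) (c : α → κ) : Prop :=
  ∀ C, Circuit M C → ¬ Set.InjOn c C

/-- The union of the first `j` colour classes in an enumeration `f` of the colours. -/
def initialUnion (M : Matroid α) (c : α → κ) {k : ℕ} (f : Fin k → κ) (j : Fin k) : Set α :=
  ⋃ i ∈ Set.Iic j, colourClass M c (f i)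

/-- A colouring of a matroid is stratified if its (nonempty) colour classes can be
enumerated `X_{i_1}, …, X_{i_k}` so that each initial union
`S_j = X_{i_1} ∪ ⋯ ∪ X_{i_j}` is closed and `1 ≤ r(S_1) < r(S_2) < ⋯ < r(S_k) = r(M)`. -/
def Stratified (M : Matroid α) (c : α → κ) : Prop :=
  ∃ (k : ℕ) (f : Fin k → κ),
    Function.Injective f ∧
    (∀ e ∈ M.E, ∃ j, c e = f j) ∧
    (∀ j, (colourClass M c (f j)).Nonempty) ∧
    (∀ j, M.closure (initialUnion M c f j) = initialUnion M c f j) ∧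
    StrictMono (fun j => rkSet M (initialUnion M c f j)) ∧
    (∀ j, 1 ≤ rkSet M (initialUnion M c f j)) ∧
    (∀ j : Fin k, j.val = k - 1 → rkSet M (initialUnion M c f j) = rk M)

/-- A short rainbow circuit pair: two disjoint rainbow circuits whose sizes sum
to at most `r(M) + 2`. -/
def SRCP (M : Matroid α) (c : α → κ) (C₁ C₂ : Set α) : Prop :=
  RainbowCircuit M c C₁ ∧ RainbowCircuit M c C₂ ∧ Disjoint C₁ C₂ ∧
    C₁.ncard + C₂.ncard ≤ rk M + 2

/-- A short rainbow circuit 4-tuple: four rainbow circuits of total size at most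
`2 r(M) + 4` such that no element belongs to more than two of them. -/
def SRC4 (M : Matroid α) (c : α → κ) (C : Fin 4 → Set α) : Prop :=
  (∀ i, RainbowCircuit M c (C i)) ∧
  (∑ i, (C i).ncard) ≤ 2 * rk M + 4 ∧
  (∀ e : α, (Finset.univ.filter (fun i => e ∈ C i)).card ≤ 2)


/-!
Write `M✶` as the cycle matroid of a graph `G` (signed incidence vectors over `ℚ`), so that
`r(M✶) = |E| - r(M) = r(M) + 2`, and every edge cut of `G` is dependent in `M`; for a
contraction `G/π` of `G`, the non-loop edges at a vertex `v` of `G/π` form the cut of the fibre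
`π⁻¹ v`. As long as some colour class consists of two parallel non-loop edges of `G/π`, contract
one of them: the incidence rank drops by at most one while one more colour class becomes a pair
of loops, so `r(M) + 2 ≤ rank + #(loop classes)` is preserved. When no such class is left, count:
every vertex has degree at least three (`M` is simple), a star that is not rainbow contains a
whole colour class and no colour class lies in two stars, and the rainbow vertices span too few
edges to be pairwise adjacent. Two non-adjacent rainbow vertices have disjoint stars of total
size at most `r(M) + 1`, and circuits inside them are the required pair.
-/

open Finset

lemma circuit_iff_isCircuit {M : Matroid α} {C : Set α} : Circuit M C ↔ M.IsCircuit C := by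
  refine ⟨fun h => ⟨h.1, fun D hD hDC => ?_⟩, fun h => ⟨h.dep, fun D hDC hD => ?_⟩⟩
  · by_contra hCD
    exact h.2 D (hDC.ssubset_of_not_superset hCD) hD
  · exact hDC.not_subset (h.2 hD hDC.subset)

lemma exists_circuit_subset_of_dep {M : Matroid α} {X : Set α} (hX : M.Dep X) :
    ∃ C ⊆ X, Circuit M C := by
  simpa only [circuit_iff_isCircuit] using hX.exists_isCircuit_subset

lemma rk_eq_ncard_of_isBase {M : Matroid α} (hfin : M.E.Finite) {B : Set α} (hB : M.IsBase B) :
    rk M = B.ncard := by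
  have hub : ∀ n ∈ {n | ∃ I, M.Indep I ∧ I ⊆ M.E ∧ I.ncard = n}, n ≤ B.ncard := by
    rintro n ⟨I, hI, -, rfl⟩
    obtain ⟨B', hB', hIB'⟩ := hI.exists_isBase_superset
    exact (Set.ncard_le_ncard hIB' (hfin.subset hB'.subset_ground)).trans
      (hB'.ncard_eq_ncard_of_isBase hB).le
  have hmem : B.ncard ∈ {n | ∃ I, M.Indep I ∧ I ⊆ M.E ∧ I.ncard = n} :=
    ⟨B, hB.indep, hB.subset_ground, rfl⟩
  exact le_antisymm (csSup_le ⟨_, hmem⟩ hub) (le_csSup ⟨_, hub⟩ hmem)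

lemma three_le_card_of_dep {M : Matroid α} (hsimple : Simple M) {S : Finset α} (hS : M.Dep S) :
    3 ≤ #S := by
  by_contra h
  exact hS.not_indep (hsimple _ hS.subset_ground (by rw [Set.ncard_coe_finset]; omega))

lemma exists_srcp_of_dep {M : Matroid α} {c : α → κ} {S₁ S₂ : Finset α} (h₁ : M.Dep S₁)
    (h₂ : M.Dep S₂) (hdisj : Disjoint S₁ S₂) (hc₁ : Set.InjOn c S₁) (hc₂ : Set.InjOn c S₂)
    (hcard : #S₁ + #S₂ ≤ rk M + 2) : ∃ C₁ C₂, SRCP M c C₁ C₂ := by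
  obtain ⟨C₁, hCS₁, hC₁⟩ := exists_circuit_subset_of_dep h₁
  obtain ⟨C₂, hCS₂, hC₂⟩ := exists_circuit_subset_of_dep h₂
  refine ⟨C₁, C₂, ⟨hC₁, hc₁.mono hCS₁⟩, ⟨hC₂, hc₂.mono hCS₂⟩,
    (disjoint_coe.mpr hdisj).mono hCS₁ hCS₂, ?_⟩
  have := Set.ncard_le_ncard hCS₁ S₁.finite_toSet
  have := Set.ncard_le_ncard hCS₂ S₂.finite_toSet
  rw [Set.ncard_coe_finset] at *
  omega

def Represents (K : Type*) {W : Type*} [Field K] [AddCommGroup W] [Module K W] (N : Matroid α)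
    (φ : α → W) : Prop :=
  ∀ I ⊆ N.E, N.Indep I ↔ LinearIndependent K (fun e : I => φ e)

namespace Represents

variable {K W : Type*} [Field K] [AddCommGroup W] [Module K W] {N : Matroid α} {φ : α → W}
  {B : Set α}

lemma mem_span_image_of_isBase (h : Represents K N φ) (hB : N.IsBase B) {e : α}
    (he : e ∈ N.E) : φ e ∈ Submodule.span K (φ '' B) := by
  by_cases heB : e ∈ B
  · exact Submodule.subset_span ⟨e, heB, rfl⟩
  by_contra hnotin
  have hLI : LinearIndependent K (fun x : (insert e B : Set α) => φ x) :=
    (linearIndepOn_insert heB).mpr ⟨(h B hB.subset_ground).mp hB.indep, hnotin⟩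
  exact (hB.insert_dep ⟨he, heB⟩).not_indep
    ((h _ (Set.insert_subset he hB.subset_ground)).mpr hLI)

lemma span_image_ground_eq (h : Represents K N φ) (hB : N.IsBase B) :
    Submodule.span K (φ '' N.E) = Submodule.span K (φ '' B) := by
  refine le_antisymm ?_ (Submodule.span_mono (Set.image_mono hB.subset_ground))
  rw [Submodule.span_le]
  rintro _ ⟨e, he, rfl⟩
  exact h.mem_span_image_of_isBase hB he

lemma finrank_span_eq_ncard (h : Represents K N φ) (hfin : N.E.Finite) (hB : N.IsBase B) :
    Module.finrank K (Submodule.span K (φ '' N.E)) = B.ncard := by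
  have hLI : LinearIndepOn K φ B := (h B hB.subset_ground).mp hB.indep
  have := (hfin.subset hB.subset_ground).fintype
  rw [h.span_image_ground_eq hB, Set.image_eq_range, finrank_span_eq_card hLI,
    Set.ncard_eq_toFinset_card', Set.toFinset_card]

lemma dep_dual (h : Represents K N φ) (β : W →ₗ[K] K) {S : Set α} (hS : S ⊆ N.E)
    (hout : ∀ e ∈ N.E \ S, β (φ e) = 0) {e₀ : α} (he₀ : e₀ ∈ N.E) (hβ : β (φ e₀) ≠ 0) :
    N✶.Dep S := by
  refine (N✶.dep_iff).mpr ⟨fun hS' => ?_, hS⟩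
  obtain ⟨-, B, hB, hdisj⟩ := N.dual_indep_iff_exists'.mp hS'
  have hker : Submodule.span K (φ '' B) ≤ LinearMap.ker β := by
    rw [Submodule.span_le]
    rintro _ ⟨e, heB, rfl⟩
    exact hout e ⟨hB.subset_ground heB, fun heS => hdisj.ne_of_mem heS heB rfl⟩
  exact hβ (hker (h.mem_span_image_of_isBase hB he₀))

lemma finrank_span_add_rk {M : Matroid α} (h : Represents K M✶ φ) (hfin : M.E.Finite) :
    Module.finrank K (Submodule.span K (φ '' M.E)) + rk M = M.E.ncard := by
  obtain ⟨B, hB⟩ := M✶.exists_isBase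
  rw [← M.dual_ground, h.finrank_span_eq_ncard hfin hB, M.dual_ground,
    rk_eq_ncard_of_isBase hfin hB.compl_isBase_of_dual, add_comm]
  exact Set.ncard_sdiff_add_ncard_of_subset hB.subset_ground hfin

end Represents

lemma finrank_span_le_finrank_span_image_add_one {K W W' : Type*} [Field K] [AddCommGroup W]
    [Module K W] [AddCommGroup W'] [Module K W'] (L : W →ₗ[K] W') {v : W}
    (hker : LinearMap.ker L ≤ K ∙ v) {S : Set W} (hS : S.Finite) :
    Module.finrank K (Submodule.span K S) ≤ Module.finrank K (Submodule.span K (L '' S)) + 1 := by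
  set P := Submodule.span K S
  have : FiniteDimensional K P := FiniteDimensional.span_of_finite K hS
  have hrn := (L.domRestrict P).finrank_range_add_finrank_ker
  rw [LinearMap.range_domRestrict, Submodule.map_span] at hrn
  have hinj : Function.Injective ((P.subtype.comp (LinearMap.ker (L.domRestrict P)).subtype)
      |>.codRestrict (K ∙ v) fun m => hker m.2) := fun m₁ m₂ h =>
    Subtype.ext (Subtype.ext (congrArg Subtype.val h :))
  have hker1 : Module.finrank K (LinearMap.ker (L.domRestrict P)) ≤ 1 :=
    (LinearMap.finrank_le_finrank_of_injective hinj).trans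
      ((finrank_span_le_card ({v} : Set W)).trans (by simp))
  omega

section Incidence

variable {V : Type}

lemma incVec_eq_zero {q : V × V} (hq : q.1 = q.2) : incVec q = 0 := by
  funext v; simp [incVec, hq]

lemma incVec_eq_sub (q : V × V) (w : V) : incVec q = incVec (q.1, w) - incVec (q.2, w) := by
  funext v; simp only [incVec, Pi.sub_apply]; ring

lemma incVec_swap (a b : V) : incVec (b, a) = - incVec (a, b) := by
  funext v; simp only [incVec, Pi.neg_apply]; ring

noncomputable def pairing (s : Finset V) (F : V → ℚ) : (V → ℚ) →ₗ[ℚ] ℚ :=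
  ∑ v ∈ s, F v • LinearMap.proj v

lemma pairing_incVec {s : Finset V} (F : V → ℚ) {a b : V} (ha : a ∈ s) (hb : b ∈ s) :
    pairing s F (incVec (a, b)) = F a - F b := by
  simp [pairing, incVec, mul_sub, sum_sub_distrib, ha, hb]

lemma dep_of_potential {M : Matroid α} {ends : α → V × V}
    (hrep : Represents ℚ M✶ (fun e => incVec (ends e))) (hfin : M.E.Finite) (F : V → ℚ)
    {S : Set α} (hS : S ⊆ M.E) (hout : ∀ e ∈ M.E \ S, F (ends e).1 = F (ends e).2)
    {e₀ : α} (he₀ : e₀ ∈ M.E) (hF : F (ends e₀).1 ≠ F (ends e₀).2) : M.Dep S := by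
  set s := hfin.toFinset.image (fun e => (ends e).1) ∪ hfin.toFinset.image (fun e => (ends e).2)
  have hpair : ∀ e ∈ M.E, pairing s F (incVec (ends e)) = F (ends e).1 - F (ends e).2 :=
    fun e he => pairing_incVec F
      (mem_union_left _ (mem_image_of_mem _ (hfin.mem_toFinset.mpr he)))
      (mem_union_right _ (mem_image_of_mem _ (hfin.mem_toFinset.mpr he)))
  rw [← M.dual_dual]
  refine hrep.dep_dual (pairing s F) hS (fun e he => ?_) he₀ ?_
  · rw [hpair e he.1, hout e he, sub_self]
  · rwa [hpair e₀ he₀, sub_ne_zero]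

noncomputable def mergeMap (x y : V) : (V → ℚ) →ₗ[ℚ] (V → ℚ) :=
  LinearMap.id + (LinearMap.proj x).smulRight (incVec (y, x))

lemma mergeMap_incVec (x y a b : V) :
    mergeMap x y (incVec (a, b)) =
      incVec (Function.update id x y a, Function.update id x y b) := by
  change incVec (a, b) + incVec (a, b) x • incVec (y, x) = _
  funext v
  by_cases ha : a = x <;> by_cases hb : b = x
  · subst ha hb; simp [incVec]
  · subst ha; simp [incVec, Function.update_of_ne hb, Ne.symm hb]
  · subst hb; simp [incVec, Function.update_of_ne ha, Ne.symm ha]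
  · simp [incVec, Function.update_of_ne ha, Function.update_of_ne hb, Ne.symm ha, Ne.symm hb]

lemma ker_mergeMap_le (x y : V) : LinearMap.ker (mergeMap x y) ≤ ℚ ∙ incVec (x, y) := by
  intro f hf
  rw [Submodule.mem_span_singleton]
  refine ⟨f x, ?_⟩
  have hf' : f + f x • incVec (y, x) = 0 := hf
  rw [incVec_swap, smul_neg, ← sub_eq_add_neg, sub_eq_zero] at hf'
  exact hf'.symm

end Incidence

section ColouredGraph

variable {V : Type*} (E : Finset α) (p : α → V × V) (c : α → κ)

noncomputable def endpoints (e : α) : Finset V := {(p e).1, (p e).2}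

noncomputable def properEdges : Finset α := {e ∈ E | (p e).1 ≠ (p e).2}

noncomputable def incidentEdges (v : V) : Finset α := {e ∈ properEdges E p | v ∈ endpoints p e}

noncomputable def vertexSet : Finset V := (properEdges E p).biUnion (endpoints p)

noncomputable def loopColours : Finset κ :=
  {t ∈ E.image c | ∀ e ∈ E, c e = t → (p e).1 = (p e).2}

def HasParallelPair : Prop :=
  ∃ e ∈ E, ∃ f ∈ E, e ≠ f ∧ c e = c f ∧ (p e).1 ≠ (p e).2 ∧ endpoints p e = endpoints p f

def IsCherry (v : V) (t : κ) : Prop :=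
  ∃ e ∈ incidentEdges E p v, ∃ f ∈ incidentEdges E p v, e ≠ f ∧ c e = t ∧ c f = t

noncomputable def rainbowVertices : Finset V :=
  {v ∈ vertexSet E p | Set.InjOn c (incidentEdges E p v)}

noncomputable def cherryColours : Finset κ := {t ∈ E.image c | ∃ v, IsCherry E p c v t}

def IsTwoUniform : Prop := ∀ t ∈ E.image c, #{e ∈ E | c e = t} = 2

variable {E p c}

lemma mem_endpoints {e : α} {v : V} : v ∈ endpoints p e ↔ v = (p e).1 ∨ v = (p e).2 := by
  simp [endpoints]

lemma mem_properEdges {e : α} : e ∈ properEdges E p ↔ e ∈ E ∧ (p e).1 ≠ (p e).2 :=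
  mem_filter

lemma card_properEdges_add_card_loops :
    #(properEdges E p) + #{e ∈ E | (p e).1 = (p e).2} = #E := by
  rw [add_comm]
  exact card_filter_add_card_filter_not _

lemma mem_incidentEdges {v : V} {e : α} :
    e ∈ incidentEdges E p v ↔ e ∈ E ∧ (p e).1 ≠ (p e).2 ∧ v ∈ endpoints p e := by
  simp [incidentEdges, properEdges, and_assoc]

lemma endpoints_eq_pair {e : α} {v w : V} (hvw : v ≠ w) (hv : v ∈ endpoints p e)
    (hw : w ∈ endpoints p e) : endpoints p e = {v, w} :=
  (eq_of_subset_of_card_le (insert_subset hv (singleton_subset_iff.mpr hw))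
    (card_le_two.trans (card_pair hvw).ge)).symm

lemma endpoints_eq_of_mem_incidentEdges {e : α} {v w : V} (hvw : v ≠ w)
    (hv : e ∈ incidentEdges E p v) (hw : e ∈ incidentEdges E p w) : endpoints p e = {v, w} :=
  endpoints_eq_pair hvw (mem_incidentEdges.mp hv).2.2 (mem_incidentEdges.mp hw).2.2

lemma not_injOn_iff_exists_isCherry {v : V} :
    ¬ Set.InjOn c (incidentEdges E p v) ↔ ∃ t, IsCherry E p c v t := by
  simp only [Set.InjOn, mem_coe, IsCherry]
  constructor
  · intro h
    push Not at h
    obtain ⟨e, he, f, hf, hcef, hef⟩ := h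
    exact ⟨c e, e, he, f, hf, hef, rfl, hcef.symm⟩
  · rintro ⟨t, e, he, f, hf, hef, rfl, hcf⟩ h
    exact hef (h he hf hcf.symm)

lemma choose_two_le_card_filter_endpoints_subset {S : Finset V}
    (hadj : ∀ u ∈ S, ∀ w ∈ S, u ≠ w →
      ∃ e ∈ properEdges E p, u ∈ endpoints p e ∧ w ∈ endpoints p e) :
    (#S).choose 2 ≤ #{e ∈ properEdges E p | endpoints p e ⊆ S} := by
  rw [← card_powersetCard]
  refine card_le_card_of_surjOn (endpoints p) (fun P hP => ?_)
  obtain ⟨hPS, hP2⟩ := mem_powersetCard.mp hP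
  obtain ⟨u, w, huw, rfl⟩ := card_eq_two.mp hP2
  obtain ⟨e, he, hu, hw⟩ := hadj u (hPS (by simp)) w (hPS (by simp)) huw
  have hend := endpoints_eq_pair huw hu hw
  exact ⟨e, mem_filter.mpr ⟨he, hend ▸ hPS⟩, hend⟩

lemma sum_card_incidentEdges_le :
    ∑ v ∈ vertexSet E p, #(incidentEdges E p v) ≤ 2 * #(properEdges E p) :=
  calc ∑ v ∈ vertexSet E p, #(incidentEdges E p v)
      = ∑ e ∈ properEdges E p, #{v ∈ vertexSet E p | v ∈ endpoints p e} :=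
        sum_card_bipartiteAbove_eq_sum_card_bipartiteBelow (fun v e => v ∈ endpoints p e)
    _ ≤ ∑ e ∈ properEdges E p, 2 :=
        sum_le_sum fun e _ => (card_le_card fun _ hv => (mem_filter.mp hv).2).trans card_le_two
    _ = 2 * #(properEdges E p) := by rw [sum_const, smul_eq_mul, mul_comm]

lemma card_incidentEdges_add_card_incidentEdges_le
    (hdeg : ∀ v ∈ vertexSet E p, 3 ≤ #(incidentEdges E p v)) {u w : V}
    (hu : u ∈ vertexSet E p) (hw : w ∈ vertexSet E p) (huw : u ≠ w) :
    #(incidentEdges E p u) + #(incidentEdges E p w) + 3 * (#(vertexSet E p) - 2) ≤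
      2 * #(properEdges E p) := by
  have hw' : w ∈ (vertexSet E p).erase u := mem_erase.mpr ⟨huw.symm, hw⟩
  have hrest : 3 * #(((vertexSet E p).erase u).erase w) ≤
      ∑ v ∈ ((vertexSet E p).erase u).erase w, #(incidentEdges E p v) := by
    rw [mul_comm, ← smul_eq_mul]
    exact card_nsmul_le_sum _ _ _ fun v hv => hdeg v (mem_of_mem_erase (mem_of_mem_erase hv))
  rw [card_erase_of_mem hw', card_erase_of_mem hu] at hrest
  have hsum := sum_card_incidentEdges_le (E := E) (p := p)
  rw [← add_sum_erase _ _ hu, ← add_sum_erase _ _ hw'] at hsum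
  omega

lemma two_mul_lt_choose_two {x n : ℕ} (h : x + 2 ≤ n) : 2 * x < n.choose 2 := by
  obtain ⟨m, rfl⟩ : ∃ m, n = m + 1 := ⟨n - 1, by omega⟩
  have hm : (m + 1) * m = (m + 1).choose 2 * 2 := by
    simpa using Nat.add_one_mul_choose_eq m 1
  have hxm : x + 1 ≤ m := by omega
  nlinarith [Nat.mul_le_mul h hxm, Nat.le_mul_self x]

namespace IsTwoUniform

variable (huni : IsTwoUniform E c)
include huni

lemma card_filter_colour_mem {S : Finset κ} (hS : S ⊆ E.image c) :
    #{e ∈ E | c e ∈ S} = 2 * #S := by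
  rw [card_eq_sum_card_fiberwise (s := {e ∈ E | c e ∈ S}) (f := c) (t := S)
      (fun e he => (mem_filter.mp he).2),
    sum_congr rfl (fun t ht => ?_), sum_const, smul_eq_mul, mul_comm]
  rw [filter_filter, ← huni t (hS ht)]
  congr 1
  exact filter_congr (fun e _ => ⟨fun h => h.2, fun h => ⟨h ▸ ht, h⟩⟩)

lemma card_eq : #E = 2 * #(E.image c) := by
  rw [← huni.card_filter_colour_mem subset_rfl,
    filter_true_of_mem (fun e he => mem_image_of_mem c he)]

lemma eq_or_eq {e f g : α} (he : e ∈ E) (hf : f ∈ E) (hg : g ∈ E) (hef : e ≠ f)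
    (hcf : c f = c e) (hcg : c g = c e) : g = e ∨ g = f := by
  have hcls : ({e, f} : Finset α) = {x ∈ E | c x = c e} :=
    eq_of_subset_of_card_le
      (insert_subset (by simp [he]) (singleton_subset_iff.mpr (by simp [hf, hcf])))
      (by rw [huni _ (mem_image_of_mem c he), card_pair hef])
  have : g ∈ ({e, f} : Finset α) := by rw [hcls]; simp [hg, hcg]
  simpa using this

lemma mem_incidentEdges_of_isCherry {v : V} {e : α} (he : e ∈ E)
    (hv : IsCherry E p c v (c e)) : e ∈ incidentEdges E p v := by
  obtain ⟨e', he', f', hf', hef', hce', hcf'⟩ := hv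
  rcases huni.eq_or_eq (mem_incidentEdges.mp he').1 (mem_incidentEdges.mp hf').1 he hef'
    (hcf'.trans hce'.symm) hce'.symm with rfl | rfl
  exacts [he', hf']

lemma two_mul_card_loopColours_le :
    2 * #(loopColours E p c) ≤ #{e ∈ E | (p e).1 = (p e).2} := by
  rw [← huni.card_filter_colour_mem (S := loopColours E p c) (filter_subset _ _)]
  refine card_le_card (fun e he => ?_)
  simp only [mem_filter, loopColours] at he ⊢
  exact ⟨he.1, he.2.2 e he.1 rfl⟩

lemma card_filter_endpoints_subset_add_le :
    #{e ∈ properEdges E p | endpoints p e ⊆ rainbowVertices E p c} +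
      #{e ∈ E | (p e).1 = (p e).2} + 2 * #(cherryColours E p c) ≤ 2 * #(E.image c) := by
  set ch := cherryColours E p c
  have hsub : {e ∈ properEdges E p | endpoints p e ⊆ rainbowVertices E p c} ∪
      {e ∈ E | (p e).1 = (p e).2} ⊆ {e ∈ E | c e ∉ ch} := by
    intro e he
    have heE : e ∈ E := by
      rcases mem_union.mp he with h | h
      exacts [(mem_properEdges.mp (mem_filter.mp h).1).1, (mem_filter.mp h).1]
    refine mem_filter.mpr ⟨heE, fun hch => ?_⟩
    obtain ⟨v, hv⟩ := (mem_filter.mp hch).2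
    have hev := huni.mem_incidentEdges_of_isCherry heE hv
    rcases mem_union.mp he with h | h
    · have hrv := (mem_filter.mp ((mem_filter.mp h).2 (mem_incidentEdges.mp hev).2.2)).2
      exact not_injOn_iff_exists_isCherry.mpr ⟨_, hv⟩ hrv
    · exact (mem_incidentEdges.mp hev).2.1 (mem_filter.mp h).2
  have hdisj : Disjoint {e ∈ properEdges E p | endpoints p e ⊆ rainbowVertices E p c}
      {e ∈ E | (p e).1 = (p e).2} :=
    disjoint_left.mpr fun e he hl =>
      (mem_properEdges.mp (mem_filter.mp he).1).2 (mem_filter.mp hl).2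
  have hsplit := card_filter_add_card_filter_not (s := E) (fun e => c e ∈ ch)
  rw [huni.card_filter_colour_mem (S := ch) (filter_subset _ _), huni.card_eq] at hsplit
  have := card_le_card hsub
  rw [card_union_of_disjoint hdisj] at this
  omega

lemma card_vertexSet_le (hpar : ¬ HasParallelPair E p c) :
    #(vertexSet E p) ≤ #(rainbowVertices E p c) + #(cherryColours E p c) := by
  rw [← card_filter_add_card_filter_not (s := vertexSet E p)
    (fun v => Set.InjOn c (incidentEdges E p v))]
  refine Nat.add_le_add_left (card_le_card_of_forall_subsingleton
    (fun v t => IsCherry E p c v t) (fun v hv => ?_) (fun t _ => ?_)) _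
  · obtain ⟨t, ht⟩ := not_injOn_iff_exists_isCherry.mp (mem_filter.mp hv).2
    refine ⟨t, mem_filter.mpr ⟨?_, v, ht⟩, ht⟩
    obtain ⟨e, he, -, -, -, rfl, -⟩ := ht
    exact mem_image_of_mem c (mem_incidentEdges.mp he).1
  -- both edges of colour `t` would join `v` and `w`, a parallel pair
  · rintro v ⟨-, hv⟩ w ⟨-, hw⟩
    by_contra hvw
    obtain ⟨e, he, f, hf, hef, rfl, hcf⟩ := hv
    have heE := (mem_incidentEdges.mp he).1
    have hfE := (mem_incidentEdges.mp hf).1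
    refine hpar ⟨e, heE, f, hfE, hef, hcf.symm, (mem_incidentEdges.mp he).2.1, ?_⟩
    rw [endpoints_eq_of_mem_incidentEdges hvw he (huni.mem_incidentEdges_of_isCherry heE hw),
      endpoints_eq_of_mem_incidentEdges hvw hf
        (huni.mem_incidentEdges_of_isCherry hfE (hcf ▸ hw))]

lemma exists_rainbow_nonadjacent (hpar : ¬ HasParallelPair E p c)
    (hbig : #(E.image c) + 2 ≤ #(vertexSet E p) + #(loopColours E p c)) :
    ∃ u ∈ rainbowVertices E p c, ∃ w ∈ rainbowVertices E p c, u ≠ w ∧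
      ∀ e ∈ properEdges E p, ¬ (u ∈ endpoints p e ∧ w ∈ endpoints p e) := by
  by_contra! hadj
  have hcomplete := choose_two_le_card_filter_endpoints_subset hadj
  have hlt := two_mul_lt_choose_two (n := #(rainbowVertices E p c))
    (x := #(E.image c) - #(loopColours E p c) - #(cherryColours E p c))
  have := huni.card_vertexSet_le hpar
  have := huni.card_filter_endpoints_subset_add_le (p := p)
  have := huni.two_mul_card_loopColours_le (p := p)
  omega

theorem exists_disjoint_rainbow_incidentEdges (hpar : ¬ HasParallelPair E p c)
    (hdeg : ∀ v ∈ vertexSet E p, 3 ≤ #(incidentEdges E p v))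
    (hbig : #(E.image c) + 2 ≤ #(vertexSet E p) + #(loopColours E p c)) :
    ∃ u ∈ vertexSet E p, ∃ w ∈ vertexSet E p,
      Disjoint (incidentEdges E p u) (incidentEdges E p w) ∧
      Set.InjOn c (incidentEdges E p u) ∧ Set.InjOn c (incidentEdges E p w) ∧
      #(incidentEdges E p u) + #(incidentEdges E p w) ≤ #(E.image c) := by
  obtain ⟨u, hu, w, hw, huw, hnadj⟩ := huni.exists_rainbow_nonadjacent hpar hbig
  rw [rainbowVertices, mem_filter] at hu hw
  refine ⟨u, hu.1, w, hw.1, disjoint_left.mpr fun e heu hew => ?_, hu.2, hw.2, ?_⟩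
  · exact hnadj e (mem_filter.mp heu).1 ⟨(mem_filter.mp heu).2, (mem_filter.mp hew).2⟩
  have := card_incidentEdges_add_card_incidentEdges_le hdeg hu.1 hw.1 huw
  have := huni.two_mul_card_loopColours_le (p := p)
  have := card_properEdges_add_card_loops (E := E) (p := p)
  have := huni.card_eq
  omega

end IsTwoUniform

end ColouredGraph

section Contraction

variable {V : Type} {E : Finset α} {p : α → V × V} {c : α → κ}

noncomputable def incidenceRank (E : Finset α) (p : α → V × V) : ℕ :=
  Module.finrank ℚ (Submodule.span ℚ ((fun e => incVec (p e)) '' (E : Set α)))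

lemma incVec_mem_span_image_erase {T : Finset V} {v w₀ : V} (hv : v ∈ T) :
    incVec (v, w₀) ∈
      Submodule.span ℚ (((T.erase w₀).image fun u => incVec (u, w₀)) : Set (V → ℚ)) := by
  by_cases hvw : v = w₀
  · simp [hvw, incVec_eq_zero]
  · exact Submodule.subset_span (mem_coe.mpr (mem_image.mpr ⟨v, mem_erase.mpr ⟨hvw, hv⟩, rfl⟩))

lemma incidenceRank_le_card_vertexSet : incidenceRank E p ≤ #(vertexSet E p) - 1 := by
  have hend : ∀ e ∈ E, (p e).1 ≠ (p e).2 → (p e).1 ∈ vertexSet E p ∧ (p e).2 ∈ vertexSet E p :=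
    fun e he hne => ⟨mem_biUnion.mpr ⟨e, mem_properEdges.mpr ⟨he, hne⟩, by simp [endpoints]⟩,
      mem_biUnion.mpr ⟨e, mem_properEdges.mpr ⟨he, hne⟩, by simp [endpoints]⟩⟩
  rcases (vertexSet E p).eq_empty_or_nonempty with hT | ⟨w₀, hw₀⟩
  · have hzero : (fun e => incVec (p e)) '' (E : Set α) ⊆ {0} := by
      rintro _ ⟨e, he, rfl⟩
      by_cases hne : (p e).1 = (p e).2
      · exact incVec_eq_zero hne
      · simp [hT] at hend
        exact absurd (hend e he) hne
    have := Submodule.span_mono (R := ℚ) hzero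
    rw [Submodule.span_zero_singleton, le_bot_iff] at this
    rw [incidenceRank, this, finrank_bot]
    exact Nat.zero_le _
  · set T := (vertexSet E p).erase w₀
    have hspan : Submodule.span ℚ ((fun e => incVec (p e)) '' (E : Set α)) ≤
        Submodule.span ℚ ((T.image fun u => incVec (u, w₀)) : Set (V → ℚ)) := by
      rw [Submodule.span_le]
      rintro _ ⟨e, he, rfl⟩
      by_cases hne : (p e).1 = (p e).2
      · simp [incVec_eq_zero hne]
      · obtain ⟨h1, h2⟩ := hend e he hne
        change incVec (p e) ∈ _
        rw [incVec_eq_sub (p e) w₀]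
        exact sub_mem (incVec_mem_span_image_erase h1) (incVec_mem_span_image_erase h2)
    calc incidenceRank E p ≤ #(T.image fun u => incVec (u, w₀)) :=
          (Submodule.finrank_mono hspan).trans (finrank_span_finset_le_card _)
      _ ≤ #(vertexSet E p) - 1 := card_image_le.trans (card_erase_of_mem hw₀).le

lemma incidenceRank_le_incidenceRank_merge (x y : V) :
    incidenceRank E p ≤
      incidenceRank E (Prod.map (Function.update id x y) (Function.update id x y) ∘ p) + 1 := by
  have himage :
      (fun e => incVec ((Prod.map (Function.update id x y) (Function.update id x y) ∘ p) e))
        '' (E : Set α) = mergeMap x y '' ((fun e => incVec (p e)) '' (E : Set α)) := by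
    rw [Set.image_image]
    exact Set.image_congr fun e _ => (mergeMap_incVec x y _ _).symm
  unfold incidenceRank
  rw [himage]
  exact finrank_span_le_finrank_span_image_add_one _ (ker_mergeMap_le x y)
    ((E.finite_toSet).image _)

lemma loopColours_subset_map (g : V → V) :
    loopColours E p c ⊆ loopColours E (Prod.map g g ∘ p) c := by
  intro t ht
  simp only [loopColours, mem_filter] at ht ⊢
  exact ⟨ht.1, fun e he hc => by simp [ht.2 e he hc]⟩

lemma update_id_eq_of_mem_pair {x y z : V} (hz : z ∈ ({x, y} : Finset V)) :
    Function.update id x y z = y := by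
  rcases mem_insert.mp hz with rfl | hz
  · simp
  · rw [mem_singleton.mp hz, Function.update_apply]
    split_ifs with h <;> simp [h]

lemma IsTwoUniform.card_loopColours_lt_merge (huni : IsTwoUniform E c) {e f : α} (he : e ∈ E)
    (hf : f ∈ E) (hef : e ≠ f) (hcf : c e = c f) (hne : (p e).1 ≠ (p e).2)
    (hpar : endpoints p e = endpoints p f) :
    #(loopColours E p c) < #(loopColours E (Prod.map (Function.update id (p e).1 (p e).2)
      (Function.update id (p e).1 (p e).2) ∘ p) c) := by
  refine card_lt_card ((ssubset_iff_of_subset (loopColours_subset_map _)).mpr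
    ⟨c e, mem_filter.mpr ⟨mem_image_of_mem c he, fun g hg hcg => ?_⟩, fun h => ?_⟩)
  · have hge : endpoints p g = endpoints p e := by
      rcases huni.eq_or_eq he hf hg hef hcf.symm hcg with rfl | rfl
      exacts [rfl, hpar.symm]
    have h1 : (p g).1 ∈ endpoints p e := hge ▸ by simp [endpoints]
    have h2 : (p g).2 ∈ endpoints p e := hge ▸ by simp [endpoints]
    simp only [Function.comp_apply, Prod.map_fst, Prod.map_snd]
    rw [update_id_eq_of_mem_pair h1, update_id_eq_of_mem_pair h2]
  · exact hne ((mem_filter.mp h).2 e he rfl)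

lemma IsTwoUniform.exists_not_hasParallelPair (huni : IsTwoUniform E c) (m : ℕ)
    (p : α → V × V) (hm : m ≤ incidenceRank E p + #(loopColours E p c)) :
    ∃ π : V → V, m ≤ incidenceRank E (Prod.map π π ∘ p) + #(loopColours E (Prod.map π π ∘ p) c)
      ∧ ¬ HasParallelPair E (Prod.map π π ∘ p) c := by
  induction hn : #(E.image c) - #(loopColours E p c) using Nat.strong_induction_on
    generalizing p with
  | _ n ih =>
  by_cases hpar : HasParallelPair E p c
  · obtain ⟨e, he, f, hf, hef, hcf, hne, hpair⟩ := hpar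
    have hlt := huni.card_loopColours_lt_merge he hf hef hcf hne hpair
    have hrk := incidenceRank_le_incidenceRank_merge (E := E) (p := p) (p e).1 (p e).2
    set g := Function.update id (p e).1 (p e).2
    have hsub : #(loopColours E (Prod.map g g ∘ p) c) ≤ #(E.image c) :=
      card_le_card (filter_subset _ _)
    obtain ⟨π, hπ, hπpar⟩ := ih _ (by omega) (Prod.map g g ∘ p) (by omega) rfl
    exact ⟨π ∘ g, hπ, hπpar⟩
  · exact ⟨id, hm, hpar⟩

end Contraction

lemma dep_incidentEdges {V : Type} {M : Matroid α} {ends : α → V × V}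
    (hrep : Represents ℚ M✶ (fun e => incVec (ends e))) (hfin : M.E.Finite) (π : V → V) {v : V}
    (hv : v ∈ vertexSet hfin.toFinset (Prod.map π π ∘ ends)) :
    M.Dep (incidentEdges hfin.toFinset (Prod.map π π ∘ ends) v : Set α) := by
  obtain ⟨e₀, he₀, hv₀⟩ := mem_biUnion.mp hv
  refine dep_of_potential hrep hfin (fun u => if π u = v then 1 else 0)
    (fun e he => hfin.mem_toFinset.mp (mem_incidentEdges.mp he).1) (fun e he => ?_)
    (hfin.mem_toFinset.mp (mem_properEdges.mp he₀).1) ?_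
  · obtain ⟨heE, heS⟩ := he
    by_cases hl : π (ends e).1 = π (ends e).2
    · rw [hl]
    · have hve : ¬ (π (ends e).1 = v ∨ π (ends e).2 = v) := fun h =>
        heS (mem_incidentEdges.mpr ⟨hfin.mem_toFinset.mpr heE, hl,
          mem_endpoints.mpr (h.imp Eq.symm Eq.symm)⟩)
      push Not at hve
      rw [if_neg hve.1, if_neg hve.2]
  · have hne := (mem_properEdges.mp he₀).2
    simp only [Function.comp_apply, Prod.map_fst, Prod.map_snd] at hne
    rcases mem_endpoints.mp hv₀ with h | h <;>
      simp only [Function.comp_apply, Prod.map_fst, Prod.map_snd] at h <;> subst h <;>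
      simp [hne, Ne.symm hne]

lemma isTwoUniform_toFinset {M : Matroid α} (hfin : M.E.Finite) {c : α → κ}
    (huni : ∀ s ∈ c '' M.E, (colourClass M c s).ncard = 2) : IsTwoUniform hfin.toFinset c := by
  intro t ht
  rw [← Set.ncard_coe_finset, ← huni t (by simpa using ht)]
  congr 1
  ext e
  simp [colourClass]

/-- a simple cographic matroid with a 2-uniform `(r(M)+1)`-colouring
has two disjoint rainbow circuits whose sizes sum to at most `r(M) + 2`. -/
theorem cographic_srcp (M : Matroid α) (hM : IsCographic M)
    (hfin : M.E.Finite) (hsimple : Simple M) (c : α → κ)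
    (huni : ∀ s ∈ c '' M.E, (colourClass M c s).ncard = 2)
    (hcols : (c '' M.E).ncard = rk M + 1) :
    ∃ C₁ C₂, SRCP M c C₁ C₂ := by
  obtain ⟨V, ends, hrep⟩ := hM
  replace hrep : Represents ℚ M✶ (fun e => incVec (ends e)) := hrep
  set E := hfin.toFinset
  have huni' : IsTwoUniform E c := isTwoUniform_toFinset hfin huni
  have hK : #(E.image c) = rk M + 1 := by
    rw [← hcols, ← Set.ncard_coe_finset, coe_image, Set.Finite.coe_toFinset]
  have hrank : incidenceRank E ends = rk M + 2 := by
    have := hrep.finrank_span_add_rk hfin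
    rw [Set.ncard_eq_toFinset_card M.E hfin, huni'.card_eq, hK] at this
    rw [incidenceRank, Set.Finite.coe_toFinset]
    omega
  obtain ⟨π, hinv, hpar⟩ := huni'.exists_not_hasParallelPair (rk M + 2) ends (by omega)
  have hbig : #(E.image c) + 2 ≤
      #(vertexSet E (Prod.map π π ∘ ends)) + #(loopColours E (Prod.map π π ∘ ends) c) := by
    have := incidenceRank_le_card_vertexSet (E := E) (p := Prod.map π π ∘ ends)
    have : #(loopColours E (Prod.map π π ∘ ends) c) ≤ #(E.image c) :=
      card_le_card (filter_subset _ _)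
    omega
  obtain ⟨u, hu, w, hw, hdisj, hcu, hcw, hcard⟩ := huni'.exists_disjoint_rainbow_incidentEdges
    hpar (fun v hv => three_le_card_of_dep hsimple (dep_incidentEdges hrep hfin π hv)) hbig
  exact exists_srcp_of_dep (dep_incidentEdges hrep hfin π hu) (dep_incidentEdges hrep hfin π hw)
    hdisj hcu hcw (hcard.trans (by omega))
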